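/- Let a > −1 and γ > 0, and define k_{a,γ}(t) := e^{−te} · ∫_0^∞ t^{a+b} b^{γ−1} / ( Γ(γ) Γ(a+b+1) ) db for t > 0, where Γ is the Gamma function. Then for every s ≥ 0, the Laplace transform of k_{a,γ} satisfies ∫_0^∞ e^{−st} k_{a,γ}(t) dt = 1 / ( (e+s)^{a+1} · (ln(e+s))^{γ} ). -/

import Mathlib

open MeasureTheory

/-- The kernel `k_{a,γ}(t) := e^{-te} ∫_0^∞ t^{a+b} b^{γ-1} / (Γ(γ)Γ(a+b+1)) db`. -/
noncomputable def kKer (a γ : ℝ) (t : ℝ) : ℝ :=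
  Real.exp (-(t * Real.exp 1)) *
    ∫ b in Set.Ioi (0:ℝ), t ^ (a + b) * b ^ (γ - 1) / (Real.Gamma γ * Real.Gamma (a + b + 1))

open Real Set

/-- Auxiliary two-variable kernel. -/
noncomputable def Faux (a γ c : ℝ) : ℝ → ℝ → ℝ := fun b t =>
  Real.exp (-(c * t)) * (t ^ (a + b) * b ^ (γ - 1) / (Real.Gamma γ * Real.Gamma (a + b + 1)))

lemma integrableOn_aux {p r : ℝ} (hp : 0 < p) (hr : 0 < r) :
    IntegrableOn (fun t : ℝ => t ^ (p - 1) * Real.exp (-(r * t))) (Set.Ioi 0) := by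
  have h0 := Real.GammaIntegral_convergent hp
  have h1 : IntegrableOn (fun t : ℝ => Real.exp (-(r * t)) * (r * t) ^ (p - 1)) (Set.Ioi 0) := by
    have := (integrableOn_Ioi_comp_mul_left_iff
      (fun x : ℝ => Real.exp (-x) * x ^ (p - 1)) 0 hr).mpr
    rw [mul_zero] at this
    exact this h0
  refine IntegrableOn.congr_fun (h1.const_mul (r ^ (-(p-1)))) (fun t ht => ?_) measurableSet_Ioi
  have ht' : (0:ℝ) < t := ht
  have : r ^ (-(p-1)) * r ^ (p-1) = 1 := by
    rw [← Real.rpow_add hr]; simp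
  rw [Real.mul_rpow hr.le ht'.le]
  calc r ^ (-(p - 1)) * (rexp (-(r * t)) * (r ^ (p - 1) * t ^ (p - 1)))
      = (r ^ (-(p-1)) * r ^ (p-1)) * (t ^ (p - 1) * rexp (-(r * t))) := by ring
    _ = t ^ (p - 1) * rexp (-(r * t)) := by rw [this, one_mul]

lemma inner_int {γ a c b : ℝ} (ha : -1 < a) (hc : 1 < c) (hb : 0 < b) :
    ∫ t in Set.Ioi (0:ℝ), Faux a γ c b t
      = (1/c) ^ (a+1) / Real.Gamma γ * (b ^ (γ - 1) * Real.exp (-(Real.log c * b))) := by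
  have hc0 : (0:ℝ) < c := by linarith
  have hab : 0 < a + b + 1 := by linarith
  have hΓ : 0 < Real.Gamma (a + b + 1) := Real.Gamma_pos_of_pos hab
  have key : ∫ t in Set.Ioi (0:ℝ), t ^ ((a+b+1) - 1) * Real.exp (-(c * t))
      = (1/c) ^ (a+b+1) * Real.Gamma (a+b+1) :=
    Real.integral_rpow_mul_exp_neg_mul_Ioi hab hc0
  have step : (fun t : ℝ => Faux a γ c b t)
      = fun t : ℝ => (t ^ ((a+b+1) - 1) * Real.exp (-(c * t))) *
          (b ^ (γ - 1) / (Real.Gamma γ * Real.Gamma (a + b + 1))) := by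
    funext t; simp only [Faux]; ring_nf
  rw [step, integral_mul_const, key]
  have h1 : (1/c : ℝ) ^ (a+b+1) = (1/c) ^ (a+1) * (1/c) ^ b := by
    rw [← Real.rpow_add (by positivity)]; ring_nf
  have h2 : (1/c : ℝ) ^ b = Real.exp (-(Real.log c * b)) := by
    rw [Real.rpow_def_of_pos (by positivity), one_div, Real.log_inv]; ring_nf
  rw [h1, h2]
  calc (1/c) ^ (a+1) * Real.exp (-(Real.log c * b)) * Real.Gamma (a+b+1) *
        (b ^ (γ - 1) / (Real.Gamma γ * Real.Gamma (a + b + 1)))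
      = (Real.Gamma (a+b+1) * (Real.Gamma (a+b+1))⁻¹) *
          ((1/c) ^ (a+1) / Real.Gamma γ * (b ^ (γ - 1) * Real.exp (-(Real.log c * b)))) := by
        ring
    _ = (1/c) ^ (a+1) / Real.Gamma γ * (b ^ (γ - 1) * Real.exp (-(Real.log c * b))) := by
        rw [mul_inv_cancel₀ hΓ.ne', one_mul]

lemma integrableOn_t {γ a c b : ℝ} (ha : -1 < a) (hc : 1 < c) (hb : 0 < b) :
    IntegrableOn (fun t : ℝ => Faux a γ c b t) (Set.Ioi 0) := by
  have hab : 0 < a + b + 1 := by linarith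
  refine IntegrableOn.congr_fun
    ((integrableOn_aux hab (by linarith : (0:ℝ) < c)).mul_const
      (b ^ (γ - 1) / (Real.Gamma γ * Real.Gamma (a + b + 1)))) (fun t ht => ?_) measurableSet_Ioi
  simp only [Faux]
  have he : a + b + 1 - 1 = a + b := by ring
  rw [he]; ring

lemma measurable_Faux {γ a c : ℝ} (ha : -1 < a) (hγ : 0 < γ) :
    AEStronglyMeasurable (Function.uncurry (Faux a γ c))
      ((volume.restrict (Set.Ioi 0)).prod (volume.restrict (Set.Ioi 0))) := by
  rw [Measure.prod_restrict]
  refine ContinuousOn.aestronglyMeasurable ?_ (measurableSet_Ioi.prod measurableSet_Ioi)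
  intro p hp
  have hb : (0:ℝ) < p.1 := hp.1
  have ht : (0:ℝ) < p.2 := hp.2
  have hab : 0 < a + p.1 + 1 := by linarith
  refine ContinuousAt.continuousWithinAt ?_
  have h1 : ContinuousAt (fun q : ℝ × ℝ => Real.exp (-(c * q.2))) p := by fun_prop
  have h2 : ContinuousAt (fun q : ℝ × ℝ => q.2 ^ (a + q.1)) p :=
    ContinuousAt.rpow continuousAt_snd (continuousAt_const.add continuousAt_fst) (Or.inl ht.ne')
  have h3 : ContinuousAt (fun q : ℝ × ℝ => q.1 ^ (γ - 1)) p :=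
    ContinuousAt.rpow_const continuousAt_fst (Or.inl hb.ne')
  have h4 : ContinuousAt (fun q : ℝ × ℝ => Real.Gamma (a + q.1 + 1)) p := by
    have hG : ContinuousAt Real.Gamma (a + p.1 + 1) := by
      refine (Real.differentiableAt_Gamma fun m => ?_).continuousAt
      have : (0:ℝ) ≤ (m:ℝ) := Nat.cast_nonneg m
      intro h; rw [h] at hab; linarith
    have hin : ContinuousAt (fun q : ℝ × ℝ => a + q.1 + 1) p := by fun_prop
    exact ContinuousAt.comp (g := Real.Gamma) (f := fun q : ℝ × ℝ => a + q.1 + 1) (x := p) hG hin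
  have hden : Real.Gamma γ * Real.Gamma (a + p.1 + 1) ≠ 0 :=
    (mul_pos (Real.Gamma_pos_of_pos hγ) (Real.Gamma_pos_of_pos hab)).ne'
  exact h1.mul ((h2.mul h3).div (continuousAt_const.mul h4) hden)

lemma integrable_Faux {γ a c : ℝ} (ha : -1 < a) (hγ : 0 < γ) (hc : 1 < c) :
    Integrable (Function.uncurry (Faux a γ c))
      ((volume.restrict (Set.Ioi 0)).prod (volume.restrict (Set.Ioi 0))) := by
  have hlog : 0 < Real.log c := Real.log_pos hc
  rw [integrable_prod_iff (measurable_Faux ha hγ)]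
  constructor
  · filter_upwards [ae_restrict_mem measurableSet_Ioi] with b hb
    exact integrableOn_t ha hc hb
  · refine IntegrableOn.congr_fun
      ((integrableOn_aux hγ hlog).const_mul ((1/c)^(a+1)/Real.Gamma γ))
      (fun b hb => ?_) measurableSet_Ioi
    have hb : (0:ℝ) < b := hb
    have hnorm : ∫ t in Ioi (0:ℝ), ‖Faux a γ c b t‖ = ∫ t in Ioi (0:ℝ), Faux a γ c b t := by
      refine setIntegral_congr_fun measurableSet_Ioi (fun t ht => ?_)
      have ht : (0:ℝ) < t := ht
      have hab : 0 < a + b + 1 := by linarith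
      have h0 : 0 ≤ Faux a γ c b t := by
        simp only [Faux]
        have h1 := Real.Gamma_pos_of_pos hγ
        have h2 := Real.Gamma_pos_of_pos hab
        positivity
      rw [Real.norm_eq_abs, abs_of_nonneg h0]
    show _ = ∫ t in Ioi (0:ℝ), ‖Faux a γ c b t‖
    rw [hnorm, inner_int ha hc hb]

/-- For `a > -1`, `γ > 0`, the Laplace transform of `k_{a,γ}` is
`s ↦ 1 / ((e+s)^{a+1} (ln(e+s))^γ)` for all `s ≥ 0`. -/
theorem stmt_16 (a γ : ℝ) (ha : -1 < a) (hγ : 0 < γ) (s : ℝ) (hs : 0 ≤ s) :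
    ∫ t in Set.Ioi (0:ℝ), Real.exp (-(s * t)) * kKer a γ t
      = 1 / ((Real.exp 1 + s) ^ (a + 1) * (Real.log (Real.exp 1 + s)) ^ γ) := by
  have he1 : (1:ℝ) < Real.exp 1 := by
    have := Real.add_one_le_exp 1; linarith
  set c := Real.exp 1 + s with hc
  have hc1 : 1 < c := by rw [hc]; linarith
  have hc0 : (0:ℝ) < c := by linarith
  have hlog : 0 < Real.log c := Real.log_pos hc1
  have step1 : ∀ t ∈ Set.Ioi (0:ℝ), Real.exp (-(s * t)) * kKer a γ t
      = ∫ b in Set.Ioi (0:ℝ), Faux a γ c b t := by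
    intro t ht
    rw [kKer, ← mul_assoc, ← Real.exp_add,
      show -(s * t) + -(t * Real.exp 1) = -(c * t) from by rw [hc]; ring,
      ← integral_const_mul]
    simp only [Faux]
  rw [setIntegral_congr_fun measurableSet_Ioi step1,
    ← integral_integral_swap (integrable_Faux ha hγ hc1),
    setIntegral_congr_fun measurableSet_Ioi (fun b hb => inner_int ha hc1 hb),
    integral_const_mul, Real.integral_rpow_mul_exp_neg_mul_Ioi hγ hlog]
  have hΓγ := Real.Gamma_pos_of_pos hγ
  rw [Real.div_rpow zero_le_one hc0.le, Real.div_rpow zero_le_one hlog.le,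
    Real.one_rpow, Real.one_rpow]
  field_simp
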